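/- Let n ≥ 4 and let t be a positive integer with ln n ≤ t ≤ √n. Fix x,y ∈ {0,1}^n, i ∈ [1..n], an integer g with 1 ≤ g ≤ 2t+1, a pattern p ∈ {0,1}^g, and d ∈ [−t..t] with i + d ≥ 1. Let S be the random subset of [1..n] obtained by including each row independently with probability (ln n)/t. Define: (1) i_{d,i} as the minimal r with i ≤ r ≤ n and r + d ≤ n such that Δ_H(x_{[i..r]}, y_{[i..r]+d}) > 4t, and I_{d,i} = {j ∈ [i..i_{d,i}] : x_j ≠ y_{j+d}}; (2) i_{x,p,i} as the minimal r with i ≤ r ≤ n such that |{j ∈ [i..r] : x_j ≠ p_{(((j−i) mod g)+1)}}| > 4t, and I_{x,p,i} = {j ∈ [i..i_{x,p,i}] : x_j ≠ p_{(((j−i) mod g)+1)}}; (3) i_{y,p,i} and I_{y,p,i} analogously with y in place of x. In each of the three cases, if no such minimal index exists then the corresponding bad event is empty; otherwise the bad event is that S does not intersect the corresponding mismatch set (I_{d,i}, I_{x,p,i}, or I_{y,p,i} respectively). Then each of the three bad events has probability less than 1/(9n(2t+1)). -/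

import Mathlib

/-!
Statement 15 (generalized bad sampling events).  Strings `x, y ∈ {0,1}^n` are
modelled as functions `ℤ → Bool` on positions `1..n`, and the pattern
`p ∈ {0,1}^g` as `ℤ → Bool` on positions `1..g`.  The random set `S ⊆ [1..n]` is
modelled by a point `ω` of the product Bernoulli(`ln n / t`) space `Fin n → Bool`
(coordinate `k` decides whether row `k+1` is included).
-/

namespace Stmt15

open MeasureTheory
open scoped ENNReal

/-- Bernoulli measure on `Bool` with parameter `p` (a probability measure when
`0 ≤ p ≤ 1`). -/
noncomputable def bern (p : ℝ) : Measure Bool :=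
  ENNReal.ofReal p • Measure.dirac true + ENNReal.ofReal (1 - p) • Measure.dirac false

/-- Product measure: each of the `n` rows is sampled independently with probability `p`. -/
noncomputable def sampleMeasure (n : ℕ) (p : ℝ) : Measure (Fin n → Bool) :=
  Measure.pi fun _ => bern p

/-- The sampled set of rows `S ⊆ [1..n]`: the rows `k+1` for which `ω k` is true. -/
def rowsOf (n : ℕ) (ω : Fin n → Bool) : Set ℤ :=
  {j : ℤ | ∃ k : Fin n, ω k = true ∧ j = (k : ℕ) + 1}

/-- Hamming distance between `x_{[a..b]}` and `y_{[a..b]+d}`. -/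
noncomputable def hamOn (x y : ℤ → Bool) (d a b : ℤ) : ℕ :=
  ((Finset.Icc a b).filter fun j => x j ≠ y (j + d)).card

/-- Number of positions `j ∈ [a..b]` where `z` deviates from the periodic string
with pattern `p` (of length `g`) started at position `a`. -/
noncomputable def perMismatch (z : ℤ → Bool) (p : ℤ → Bool) (g : ℕ) (a b : ℤ) : ℕ :=
  ((Finset.Icc a b).filter fun j => z j ≠ p ((j - a) % (g : ℤ) + 1)).card

/-!
If some window `[i..r]` has more than `4t` mismatches, let `r₀` be the least such `r`. Every
sample in the bad event misses all mismatch positions of `[i..r₀] ⊆ [1..n]`, which by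
independence has probability `(1 - ln n / t)^(4t) ≤ e^(-4 ln n) = n⁻⁴`, and `9n(2t+1) < n⁴`
because `t² ≤ n` and `n ≥ 4`.
-/

open Finset

instance (p : ℝ) : IsFiniteMeasure (bern p) := by
  constructor
  simp [bern]

lemma bern_singleton_false (p : ℝ) : bern p {false} = ENNReal.ofReal (1 - p) := by
  simp [bern]

lemma bern_univ {p : ℝ} (h0 : 0 ≤ p) (h1 : p ≤ 1) : bern p Set.univ = 1 := by
  simp [bern, ← ENNReal.ofReal_add h0 (sub_nonneg.2 h1)]

lemma sampleMeasure_forall_false {q : ℝ} (h0 : 0 ≤ q) (h1 : q ≤ 1) (n : ℕ) (K : Finset (Fin n)) :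
    sampleMeasure n q {ω | ∀ k ∈ K, ω k = false} = ENNReal.ofReal (1 - q) ^ #K := by
  have hpi : {ω : Fin n → Bool | ∀ k ∈ K, ω k = false}
      = Set.univ.pi fun k => if k ∈ K then {false} else Set.univ := by
    ext ω
    simp only [Set.mem_ofPred_eq, Set.mem_pi, Set.mem_univ, true_implies]
    refine forall_congr' fun k => ?_
    split_ifs with hk <;> simp [hk]
  rw [sampleMeasure, hpi, Measure.pi_pi]
  simp_rw [apply_ite (bern q), bern_singleton_false, bern_univ h0 h1]
  rw [prod_ite_mem, univ_inter, prod_const]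

lemma card_filter_succ_mem {n : ℕ} {J : Finset ℤ} (hJ : J ⊆ Icc 1 (n : ℤ)) :
    #(univ.filter fun k : Fin n => (k : ℤ) + 1 ∈ J) = #J := by
  refine card_bij (fun k _ => (k : ℤ) + 1) (by simp) (by simp [Fin.ext_iff]) fun j hj => ?_
  have hj1n := mem_Icc.1 (hJ hj)
  refine ⟨⟨(j - 1).toNat, by omega⟩, ?_, by simp; omega⟩
  simp only [mem_filter, mem_univ, true_and]
  convert hj using 1
  omega

lemma sampleMeasure_avoid {q : ℝ} (h0 : 0 ≤ q) (h1 : q ≤ 1) {n : ℕ} {J : Finset ℤ}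
    (hJ : J ⊆ Icc 1 (n : ℤ)) :
    sampleMeasure n q {ω | ∀ j ∈ J, j ∉ rowsOf n ω} = ENNReal.ofReal (1 - q) ^ #J := by
  rw [← card_filter_succ_mem hJ, ← sampleMeasure_forall_false h0 h1]
  congr 1
  ext ω
  simp only [rowsOf, Set.mem_ofPred_eq, mem_filter, mem_univ, true_and, not_exists, not_and]
  refine ⟨fun h k hk => ?_, fun h j hj k hk hjk => ?_⟩
  · exact Bool.not_eq_true _ ▸ fun hωk => h _ hk k hωk rfl
  · subst hjk
    simp [h k hj] at hk

lemma nine_mul_lt_pow_four {n t : ℕ} (hn : 4 ≤ n) (htn : t * t ≤ n) :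
    9 * n * (2 * t + 1) < n ^ 4 := by
  have h16 : 16 * n ≤ n ^ 3 := by
    calc 16 * n ≤ n * n * n := Nat.mul_le_mul_right n (Nat.mul_le_mul hn hn)
      _ = n ^ 3 := by ring
  have h : 9 * (2 * t + 1) < n ^ 3 := by nlinarith
  calc 9 * n * (2 * t + 1) = n * (9 * (2 * t + 1)) := by ring
    _ < n * n ^ 3 := by gcongr
    _ = n ^ 4 := by ring

lemma ofReal_one_sub_log_div_pow_lt {n t : ℕ} (hn : 4 ≤ n) (ht : 1 ≤ t) (htn : t * t ≤ n) :
    ENNReal.ofReal (1 - Real.log n / t) ^ (4 * t) < 1 / (9 * (n : ℝ≥0∞) * (2 * t + 1)) := by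
  set q := Real.log n / t
  have hqt : q * t = Real.log n := div_mul_cancel₀ _ (by positivity)
  have hexp : Real.exp (-q) ^ (4 * t) = ((n : ℝ) ^ 4)⁻¹ := by
    rw [← Real.exp_nat_mul, ← Real.exp_log (by positivity : (0 : ℝ) < n ^ 4), ← Real.exp_neg,
      Real.log_pow]
    congr 1
    push_cast
    linear_combination -4 * hqt
  calc ENNReal.ofReal (1 - q) ^ (4 * t) ≤ ENNReal.ofReal (Real.exp (-q)) ^ (4 * t) := by
        gcongr
        linarith [Real.add_one_le_exp (-q)]
    _ = ((n ^ 4 : ℕ) : ℝ≥0∞)⁻¹ := by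
        rw [← ENNReal.ofReal_pow (Real.exp_nonneg _), hexp, ENNReal.ofReal_inv_of_pos (by positivity)]
        norm_cast
    _ < 1 / (9 * (n : ℝ≥0∞) * (2 * t + 1)) := by
        rw [one_div, ENNReal.inv_lt_inv]
        exact_mod_cast nine_mul_lt_pow_four hn htn

lemma sampleMeasure_avoid_lt {n t : ℕ} (hn : 4 ≤ n) (ht : 1 ≤ t) (hlog : Real.log n ≤ t)
    (hsqrt : (t : ℝ) ≤ √n) {J : Finset ℤ} (hJ : J ⊆ Icc 1 (n : ℤ)) (hJt : 4 * t < #J) :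
    sampleMeasure n (Real.log n / t) {ω | ∀ j ∈ J, j ∉ rowsOf n ω}
      < 1 / (9 * (n : ℝ≥0∞) * (2 * t + 1)) := by
  have ht0 : (0 : ℝ) < t := by exact_mod_cast ht
  have hq0 : 0 ≤ Real.log n / t := div_nonneg (Real.log_natCast_nonneg n) ht0.le
  have hq1 : Real.log n / t ≤ 1 := (div_le_one ht0).2 hlog
  have htn : t * t ≤ n := by
    have := (Real.le_sqrt (Nat.cast_nonneg t) (Nat.cast_nonneg n)).1 hsqrt
    rw [sq] at this
    exact_mod_cast this
  rw [sampleMeasure_avoid hq0 hq1 hJ]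
  calc ENNReal.ofReal (1 - Real.log n / t) ^ #J
      ≤ ENNReal.ofReal (1 - Real.log n / t) ^ (4 * t) :=
        pow_le_pow_of_le_one zero_le (ENNReal.ofReal_le_one.2 (by linarith)) hJt.le
    _ < 1 / (9 * (n : ℝ≥0∞) * (2 * t + 1)) := ofReal_one_sub_log_div_pow_lt hn ht htn

lemma sampleMeasure_avoid_firstExceedance_lt {n t : ℕ} (hn : 4 ≤ n) (ht : 1 ≤ t)
    (hlog : Real.log n ≤ t) (hsqrt : (t : ℝ) ≤ √n) {i : ℤ} (hi : 1 ≤ i)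
    (M : ℤ → Prop) [DecidablePred M] (Q : ℤ → Prop)
    (hQ : ∀ r, Q r → r ≤ n ∧ 4 * t < #((Icc i r).filter M)) :
    sampleMeasure n (Real.log n / t)
        {ω | ∃ r, Q r ∧ (∀ r', Q r' → r ≤ r') ∧ ∀ j, i ≤ j → j ≤ r → M j → j ∉ rowsOf n ω}
      < 1 / (9 * (n : ℝ≥0∞) * (2 * t + 1)) := by
  set E := {ω | ∃ r, Q r ∧ (∀ r', Q r' → r ≤ r') ∧ ∀ j, i ≤ j → j ≤ r → M j → j ∉ rowsOf n ω}
  rcases E.eq_empty_or_nonempty with hE | ⟨-, r₀, hQr₀, hr₀_min, -⟩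
  · rw [hE, measure_empty]
    exact ENNReal.div_pos one_ne_zero (by finiteness)
  obtain ⟨hr₀n, hcard⟩ := hQ r₀ hQr₀
  have hJ : (Icc i r₀).filter M ⊆ Icc 1 (n : ℤ) :=
    (filter_subset _ _).trans (Icc_subset_Icc hi hr₀n)
  refine (measure_mono ?_).trans_lt (sampleMeasure_avoid_lt hn ht hlog hsqrt hJ hcard)
  rintro ω ⟨r, hQr, -, havoid⟩ j hj
  rw [mem_filter, mem_Icc] at hj
  exact havoid j hj.1.1 (hj.1.2.trans (hr₀_min r hQr)) hj.2

theorem stmt15_general (n t : ℕ) (hn : 4 ≤ n) (ht : 1 ≤ t)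
    (hlog : Real.log n ≤ (t : ℝ)) (hsqrt : (t : ℝ) ≤ Real.sqrt n)
    (x y : ℤ → Bool) (i : ℤ) (hi : 1 ≤ i)
    (g : ℕ) (p : ℤ → Bool)
    (d : ℤ) :
    sampleMeasure n (Real.log n / t)
        {ω | ∃ r : ℤ,
          (i ≤ r ∧ r ≤ (n : ℤ) ∧ r + d ≤ (n : ℤ) ∧ 4 * t < hamOn x y d i r) ∧
          (∀ r' : ℤ, (i ≤ r' ∧ r' ≤ (n : ℤ) ∧ r' + d ≤ (n : ℤ) ∧ 4 * t < hamOn x y d i r')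
            → r ≤ r') ∧
          ∀ j, i ≤ j → j ≤ r → x j ≠ y (j + d) → j ∉ rowsOf n ω}
      < 1 / (9 * (n : ℝ≥0∞) * (2 * (t : ℝ≥0∞) + 1)) ∧
    sampleMeasure n (Real.log n / t)
        {ω | ∃ r : ℤ,
          (i ≤ r ∧ r ≤ (n : ℤ) ∧ 4 * t < perMismatch x p g i r) ∧
          (∀ r' : ℤ, (i ≤ r' ∧ r' ≤ (n : ℤ) ∧ 4 * t < perMismatch x p g i r') → r ≤ r') ∧
          ∀ j, i ≤ j → j ≤ r → x j ≠ p ((j - i) % (g : ℤ) + 1) → j ∉ rowsOf n ω}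
      < 1 / (9 * (n : ℝ≥0∞) * (2 * (t : ℝ≥0∞) + 1)) ∧
    sampleMeasure n (Real.log n / t)
        {ω | ∃ r : ℤ,
          (i ≤ r ∧ r ≤ (n : ℤ) ∧ 4 * t < perMismatch y p g i r) ∧
          (∀ r' : ℤ, (i ≤ r' ∧ r' ≤ (n : ℤ) ∧ 4 * t < perMismatch y p g i r') → r ≤ r') ∧
          ∀ j, i ≤ j → j ≤ r → y j ≠ p ((j - i) % (g : ℤ) + 1) → j ∉ rowsOf n ω}
      < 1 / (9 * (n : ℝ≥0∞) * (2 * (t : ℝ≥0∞) + 1)) :=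
  ⟨sampleMeasure_avoid_firstExceedance_lt hn ht hlog hsqrt hi _ _
      fun _ hr => ⟨hr.2.1, hr.2.2.2⟩,
    sampleMeasure_avoid_firstExceedance_lt hn ht hlog hsqrt hi _ _
      fun _ hr => ⟨hr.2.1, hr.2.2⟩,
    sampleMeasure_avoid_firstExceedance_lt hn ht hlog hsqrt hi _ _
      fun _ hr => ⟨hr.2.1, hr.2.2⟩⟩

theorem stmt15 (n t : ℕ) (hn : 4 ≤ n) (ht : 1 ≤ t)
    (hlog : Real.log n ≤ (t : ℝ)) (hsqrt : (t : ℝ) ≤ Real.sqrt n)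
    (x y : ℤ → Bool) (i : ℤ) (hi : 1 ≤ i) (hin : i ≤ (n : ℤ))
    (g : ℕ) (hg1 : 1 ≤ g) (hg2 : g ≤ 2 * t + 1) (p : ℤ → Bool)
    (d : ℤ) (hd1 : -(t : ℤ) ≤ d) (hd2 : d ≤ (t : ℤ)) (hid : 1 ≤ i + d) :
    sampleMeasure n (Real.log n / t)
        {ω | ∃ r : ℤ,
          (i ≤ r ∧ r ≤ (n : ℤ) ∧ r + d ≤ (n : ℤ) ∧ 4 * t < hamOn x y d i r) ∧
          (∀ r' : ℤ, (i ≤ r' ∧ r' ≤ (n : ℤ) ∧ r' + d ≤ (n : ℤ) ∧ 4 * t < hamOn x y d i r')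
            → r ≤ r') ∧
          ∀ j, i ≤ j → j ≤ r → x j ≠ y (j + d) → j ∉ rowsOf n ω}
      < 1 / (9 * (n : ℝ≥0∞) * (2 * (t : ℝ≥0∞) + 1)) ∧
    sampleMeasure n (Real.log n / t)
        {ω | ∃ r : ℤ,
          (i ≤ r ∧ r ≤ (n : ℤ) ∧ 4 * t < perMismatch x p g i r) ∧
          (∀ r' : ℤ, (i ≤ r' ∧ r' ≤ (n : ℤ) ∧ 4 * t < perMismatch x p g i r') → r ≤ r') ∧
          ∀ j, i ≤ j → j ≤ r → x j ≠ p ((j - i) % (g : ℤ) + 1) → j ∉ rowsOf n ω}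
      < 1 / (9 * (n : ℝ≥0∞) * (2 * (t : ℝ≥0∞) + 1)) ∧
    sampleMeasure n (Real.log n / t)
        {ω | ∃ r : ℤ,
          (i ≤ r ∧ r ≤ (n : ℤ) ∧ 4 * t < perMismatch y p g i r) ∧
          (∀ r' : ℤ, (i ≤ r' ∧ r' ≤ (n : ℤ) ∧ 4 * t < perMismatch y p g i r') → r ≤ r') ∧
          ∀ j, i ≤ j → j ≤ r → y j ≠ p ((j - i) % (g : ℤ) + 1) → j ∉ rowsOf n ω}
      < 1 / (9 * (n : ℝ≥0∞) * (2 * (t : ℝ≥0∞) + 1)) :=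
  stmt15_general n t hn ht hlog hsqrt x y i hi g p d

end Stmt15
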